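/- arXiv:1807.04431 — 2 statements merged into one kernel-verified Lean document; each statement's English description precedes it below -/
import Mathlib

section
/- Let E be a finite-dimensional real inner product space and let f : E → ℝ be twice continuously differentiable, with second derivative H(x) := f''(x) regarded as a continuous symmetric bilinear form. Let λ₀, c₃ > 0 and θ₀ ∈ E. Suppose H(θ₀)(v, v) ≤ -λ₀‖v‖² for every v ∈ E, and that ‖H(x) - H(y)‖ ≤ c₃‖x - y‖ in operator norm for all x, y in the closed ball of radius λ₀/c₃ around θ₀. Then f is concave on the closed ball of radius λ₀/c₃ around θ₀ (i.e. ConcaveOn ℝ on that ball). -/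
/-!
Within the ball, `‖H z - H θ₀‖ ≤ c₃ ‖z - θ₀‖ ≤ λ₀`, so the perturbation `H z - H θ₀` cannot
undo the margin `-λ₀ ‖v‖²` of `H θ₀`: the Hessian is negative semidefinite on the whole ball.
Concavity then follows by restricting `f` to segments and applying the one-variable
second-derivative test.
-/

open Set AffineMap

theorem concaveOn_of_forall_concaveOn_lineMap {𝕜 E β : Type*} [Field 𝕜] [LinearOrder 𝕜]
    [IsStrictOrderedRing 𝕜] [AddCommGroup E] [Module 𝕜 E] [AddCommMonoid β] [PartialOrder β]
    [SMul 𝕜 β] {s : Set E} {f : E → β} (hs : Convex 𝕜 s)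
    (h : ∀ x ∈ s, ∀ y ∈ s, ConcaveOn 𝕜 (Icc (0 : 𝕜) 1) (f ∘ lineMap x y)) : ConcaveOn 𝕜 s f := by
  refine ⟨hs, fun x hx y hy a b ha hb hab ↦ ?_⟩
  have := (h x hx y hy).2 (left_mem_Icc.2 zero_le_one) (right_mem_Icc.2 zero_le_one) ha hb hab
  rwa [smul_zero, smul_eq_mul, mul_one, zero_add, Function.comp_apply, Function.comp_apply,
    Function.comp_apply, lineMap_apply_zero, lineMap_apply_one, lineMap_apply_module,
    ← eq_sub_of_add_eq hab] at this

theorem hasDerivAt_comp_lineMap {E F : Type*} [NormedAddCommGroup E] [NormedSpace ℝ E]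
    [NormedAddCommGroup F] [NormedSpace ℝ F] {g : E → F} {x y : E} {t : ℝ}
    (hg : DifferentiableAt ℝ g (lineMap x y t)) :
    HasDerivAt (g ∘ lineMap x y) (fderiv ℝ g (lineMap x y t) (y - x)) t :=
  hg.hasFDerivAt.comp_hasDerivAt t hasDerivAt_lineMap

theorem concaveOn_of_fderiv_fderiv_apply_self_nonpos {E : Type*} [NormedAddCommGroup E]
    [NormedSpace ℝ E] {s : Set E} {f : E → ℝ} (hs : Convex ℝ s) (hf : Differentiable ℝ f)
    (hf' : Differentiable ℝ (fderiv ℝ f))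
    (hf'' : ∀ z ∈ s, ∀ v, fderiv ℝ (fderiv ℝ f) z v v ≤ 0) : ConcaveOn ℝ s f := by
  refine concaveOn_of_forall_concaveOn_lineMap hs fun x hx y hy ↦ ?_
  have hderiv (t : ℝ) := hasDerivAt_comp_lineMap (x := x) (y := y) (t := t) (hf _)
  have hderiv2 (t : ℝ) :=
    (ContinuousLinearMap.apply ℝ ℝ (y - x)).hasFDerivAt.comp_hasDerivAt t
      (hasDerivAt_comp_lineMap (x := x) (y := y) (t := t) (hf' _))
  refine concaveOn_of_hasDerivWithinAt2_nonpos (convex_Icc 0 1)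
    (fun t _ ↦ (hderiv t).continuousAt.continuousWithinAt) (fun t _ ↦ (hderiv t).hasDerivWithinAt)
    (fun t _ ↦ (hderiv2 t).hasDerivWithinAt) fun t ht ↦ hf'' _ ?_ _
  exact hs.lineMap_mem hx hy (interior_subset ht)

theorem ContinuousLinearMap.apply_self_nonpos_of_norm_sub_le {E : Type*}
    [SeminormedAddCommGroup E] [NormedSpace ℝ E] {A B : E →L[ℝ] E →L[ℝ] ℝ} {c : ℝ} (hB : ∀ v, B v v ≤ -c * ‖v‖ ^ 2)
    (hAB : ‖A - B‖ ≤ c) (v : E) : A v v ≤ 0 := by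
  have hdiff : (A - B) v v ≤ c * ‖v‖ ^ 2 :=
    calc (A - B) v v ≤ ‖A - B‖ * ‖v‖ * ‖v‖ := (le_abs_self _).trans ((A - B).le_opNorm₂ v v)
      _ ≤ c * ‖v‖ ^ 2 := by rw [mul_assoc, ← sq]; gcongr
  simp only [sub_apply] at hdiff
  linarith [hB v]

theorem concaveOn_closedBall_of_hessian_bound_general
    {E : Type*} [NormedAddCommGroup E] [InnerProductSpace ℝ E]
    (f : E → ℝ) (hf : ContDiff ℝ 2 f)
    (H : E → E →L[ℝ] E →L[ℝ] ℝ) (hH : H = fderiv ℝ (fderiv ℝ f))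
    (lam0 c3 : ℝ) (hc3 : 0 < c3) (θ₀ : E)
    (hneg : ∀ v : E, H θ₀ v v ≤ -lam0 * ‖v‖ ^ 2)
    (hLip : ∀ x ∈ Metric.closedBall θ₀ (lam0 / c3),
      ∀ y ∈ Metric.closedBall θ₀ (lam0 / c3), ‖H x - H y‖ ≤ c3 * ‖x - y‖) :
    ConcaveOn ℝ (Metric.closedBall θ₀ (lam0 / c3)) f := by
  subst hH
  refine concaveOn_of_fderiv_fderiv_apply_self_nonpos (convex_closedBall _ _)
    (hf.differentiable two_ne_zero)
    ((hf.fderiv_right (m := 1) le_rfl).differentiable one_ne_zero) fun z hz ↦ ?_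
  have hθ₀ : θ₀ ∈ Metric.closedBall θ₀ (lam0 / c3) :=
    Metric.mem_closedBall_self (dist_nonneg.trans hz)
  refine ContinuousLinearMap.apply_self_nonpos_of_norm_sub_le hneg ?_
  calc ‖_ - _‖ ≤ c3 * ‖z - θ₀‖ := hLip z hz θ₀ hθ₀
    _ ≤ c3 * (lam0 / c3) := by gcongr; exact mem_closedBall_iff_norm.mp hz
    _ = lam0 := mul_div_cancel₀ _ hc3.ne'

/-- Under a uniform negative bound on the Hessian quadratic form at `θ₀`
and a `c₃`-Lipschitz bound on the Hessian in operator norm over the closed ball of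
radius `λ₀/c₃` around `θ₀`, the C² function `f` is concave on that closed ball. -/
theorem concaveOn_closedBall_of_hessian_bound
    {E : Type*} [NormedAddCommGroup E] [InnerProductSpace ℝ E] [FiniteDimensional ℝ E]
    (f : E → ℝ) (hf : ContDiff ℝ 2 f)
    (H : E → E →L[ℝ] E →L[ℝ] ℝ) (hH : H = fderiv ℝ (fderiv ℝ f))
    (lam0 c3 : ℝ) (hlam0 : 0 < lam0) (hc3 : 0 < c3) (θ₀ : E)
    (hneg : ∀ v : E, H θ₀ v v ≤ -lam0 * ‖v‖ ^ 2)
    (hLip : ∀ x ∈ Metric.closedBall θ₀ (lam0 / c3),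
      ∀ y ∈ Metric.closedBall θ₀ (lam0 / c3), ‖H x - H y‖ ≤ c3 * ‖x - y‖) :
    ConcaveOn ℝ (Metric.closedBall θ₀ (lam0 / c3)) f :=
  concaveOn_closedBall_of_hessian_bound_general f hf H hH lam0 c3 hc3 θ₀ hneg hLip
end

section
/- Let E be a finite-dimensional real inner product space and let f : E → ℝ be twice continuously differentiable, with second derivative H(x) := f''(x) regarded as a continuous symmetric bilinear form. Let λ₀, c₃ > 0 and θ₀ ∈ E. Suppose H(θ₀)(v, v) ≤ -λ₀‖v‖² for every v ∈ E, that ‖H(x) - H(y)‖ ≤ c₃‖x - y‖ in operator norm for all x, y in the closed ball of radius λ₀/c₃ around θ₀, and that the gradient of f vanishes at θ₀ (f'(θ₀) = 0). Then θ₀ is the unique maximizer of f on the closed ball: f(x) < f(θ₀) for every x with 0 < ‖x - θ₀‖ ≤ λ₀/c₃. -/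
/-! Write `v = x - θ₀`. For `0 < t < 1` the Lipschitz bound keeps `H (θ₀ + t • v)` within
`c₃ t ‖v‖ < λ₀` of `H θ₀`, so `H (θ₀ + t • v) v v < 0`. Thus `g t = f (θ₀ + t • v)` has a strictly
decreasing derivative on `[0, 1]`, which vanishes at `t = 0` because `θ₀` is critical; hence
`g` is strictly decreasing there and `f x = g 1 < g 0 = f θ₀`. -/

open Set

theorem lt_of_hasDerivAt_eq_zero_of_deriv2_neg {g g' g'' : ℝ → ℝ} {a b : ℝ} (hab : a < b)
    (hg : ∀ t ∈ Icc a b, HasDerivAt g (g' t) t) (hg' : ∀ t ∈ Icc a b, HasDerivAt g' (g'' t) t)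
    (h₀ : g' a = 0) (hneg : ∀ t ∈ Ioo a b, g'' t < 0) : g b < g a := by
  have ha : a ∈ Icc a b := left_mem_Icc.2 hab.le
  have hg'_anti : StrictAntiOn g' (Icc a b) :=
    strictAntiOn_of_deriv_neg (convex_Icc a b)
      (fun t ht => (hg' t ht).continuousAt.continuousWithinAt)
      (fun t ht => by
        rw [interior_Icc] at ht
        exact (hg' t (Ioo_subset_Icc_self ht)).deriv ▸ hneg t ht)
  have hg'_neg : ∀ t ∈ Ioo a b, g' t < 0 := fun t ht =>
    h₀ ▸ hg'_anti ha (Ioo_subset_Icc_self ht) ht.1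
  have hg_anti : StrictAntiOn g (Icc a b) :=
    strictAntiOn_of_deriv_neg (convex_Icc a b)
      (fun t ht => (hg t ht).continuousAt.continuousWithinAt)
      (fun t ht => by
        rw [interior_Icc] at ht
        exact (hg t (Ioo_subset_Icc_self ht)).deriv ▸ hg'_neg t ht)
  exact hg_anti ha (right_mem_Icc.2 hab.le) hab

section

variable {E F : Type*} [NormedAddCommGroup E] [NormedSpace ℝ E] [NormedAddCommGroup F]
  [NormedSpace ℝ F]

theorem HasFDerivAt.hasDerivAt_comp_add_smul {g : E → F} {g' : E →L[ℝ] F} {x v : E} {t : ℝ}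
    (hg : HasFDerivAt g g' (x + t • v)) : HasDerivAt (fun s : ℝ => g (x + s • v)) (g' v) t := by
  have hline : HasDerivAt (fun s : ℝ => x + s • v) v t := by
    simpa using ((hasDerivAt_id t).smul_const v).const_add x
  exact hg.comp_hasDerivAt t hline

theorem ContDiff.hasDerivAt_fderiv_comp_add_smul {f : E → ℝ} (hf : ContDiff ℝ 2 f) (x v : E)
    (t : ℝ) : HasDerivAt (fun s : ℝ => fderiv ℝ f (x + s • v) v)
      (fderiv ℝ (fderiv ℝ f) (x + t • v) v v) t := by
  have hf₂ : Differentiable ℝ (fderiv ℝ f) :=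
    (hf.fderiv_right (le_refl _)).differentiable one_ne_zero
  simpa using (hf₂ _).hasFDerivAt.hasDerivAt_comp_add_smul.clm_apply (hasDerivAt_const t v)

theorem ContinuousLinearMap.apply_apply_self_neg_of_norm_sub_lt {B B₀ : E →L[ℝ] E →L[ℝ] ℝ}
    {v : E} {lam : ℝ} (hB₀ : B₀ v v ≤ -lam * ‖v‖ ^ 2) (hB : ‖B - B₀‖ < lam) (hv : v ≠ 0) :
    B v v < 0 := by
  have hdiff : (B - B₀) v v ≤ ‖B - B₀‖ * ‖v‖ * ‖v‖ :=
    (Real.le_norm_self _).trans ((B - B₀).le_opNorm₂ v v)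
  have hv₂ : 0 < ‖v‖ ^ 2 := by positivity
  calc B v v = B₀ v v + (B - B₀) v v := by simp
    _ ≤ (‖B - B₀‖ - lam) * ‖v‖ ^ 2 := by linarith
    _ < 0 := mul_neg_of_neg_of_pos (by linarith) hv₂

end

theorem isStrictMax_on_closedBall_of_hessian_bound_general
    {E : Type*} [NormedAddCommGroup E] [InnerProductSpace ℝ E]
    (f : E → ℝ) (hf : ContDiff ℝ 2 f)
    (H : E → E →L[ℝ] E →L[ℝ] ℝ) (hH : H = fderiv ℝ (fderiv ℝ f))
    (lam0 c3 : ℝ) (hc3 : 0 < c3) (θ₀ : E)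
    (hneg : ∀ v : E, H θ₀ v v ≤ -lam0 * ‖v‖ ^ 2)
    (hLip : ∀ x ∈ Metric.closedBall θ₀ (lam0 / c3),
      ∀ y ∈ Metric.closedBall θ₀ (lam0 / c3), ‖H x - H y‖ ≤ c3 * ‖x - y‖)
    (hgrad : fderiv ℝ f θ₀ = 0) :
    ∀ x : E, 0 < ‖x - θ₀‖ → ‖x - θ₀‖ ≤ lam0 / c3 → f x < f θ₀ := by
  intro x hv₀ hvr
  set v := x - θ₀
  have hmem : ∀ t ∈ Icc (0 : ℝ) 1, θ₀ + t • v ∈ Metric.closedBall θ₀ (lam0 / c3) :=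
    fun t ht => by
      rw [Metric.mem_closedBall, dist_self_add_left, norm_smul, Real.norm_of_nonneg ht.1]
      exact (mul_le_of_le_one_left (norm_nonneg v) ht.2).trans hvr
  have hcurv : ∀ t ∈ Ioo (0 : ℝ) 1, H (θ₀ + t • v) v v < 0 := fun t ht => by
    refine (H _).apply_apply_self_neg_of_norm_sub_lt (hneg v) ?_ (norm_pos_iff.1 hv₀)
    calc ‖H (θ₀ + t • v) - H θ₀‖ ≤ c3 * ‖θ₀ + t • v - θ₀‖ :=
          hLip _ (hmem t (Ioo_subset_Icc_self ht)) _ (by simpa using hmem 0 (by simp))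
      _ = c3 * t * ‖v‖ := by
          rw [add_sub_cancel_left, norm_smul, Real.norm_of_nonneg ht.1.le, mul_assoc]
      _ < c3 * 1 * ‖v‖ := by gcongr; exact ht.2
      _ ≤ lam0 := by rw [mul_one]; exact (le_div_iff₀' hc3).1 hvr
  have hderiv : ∀ t : ℝ,
      HasDerivAt (fun s => f (θ₀ + s • v)) (fderiv ℝ f (θ₀ + t • v) v) t := fun t =>
    (hf.differentiable (by norm_num) _).hasFDerivAt.hasDerivAt_comp_add_smul
  simpa [v] using lt_of_hasDerivAt_eq_zero_of_deriv2_neg zero_lt_one (fun t _ => hderiv t)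
    (fun t _ => hH ▸ hf.hasDerivAt_fderiv_comp_add_smul θ₀ v t) (by simp [hgrad]) hcurv

/-- Under the Hessian eigenvalue bound at `θ₀`, the `c₃`-Lipschitz bound
on the Hessian over the closed ball of radius `λ₀/c₃`, and vanishing gradient at `θ₀`,
the point `θ₀` is the unique maximizer of `f` on the closed ball:
`f x < f θ₀` whenever `0 < ‖x - θ₀‖ ≤ λ₀/c₃`. -/
theorem isStrictMax_on_closedBall_of_hessian_bound
    {E : Type*} [NormedAddCommGroup E] [InnerProductSpace ℝ E] [FiniteDimensional ℝ E]
    (f : E → ℝ) (hf : ContDiff ℝ 2 f)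
    (H : E → E →L[ℝ] E →L[ℝ] ℝ) (hH : H = fderiv ℝ (fderiv ℝ f))
    (lam0 c3 : ℝ) (hlam0 : 0 < lam0) (hc3 : 0 < c3) (θ₀ : E)
    (hneg : ∀ v : E, H θ₀ v v ≤ -lam0 * ‖v‖ ^ 2)
    (hLip : ∀ x ∈ Metric.closedBall θ₀ (lam0 / c3),
      ∀ y ∈ Metric.closedBall θ₀ (lam0 / c3), ‖H x - H y‖ ≤ c3 * ‖x - y‖)
    (hgrad : fderiv ℝ f θ₀ = 0) :
    ∀ x : E, 0 < ‖x - θ₀‖ → ‖x - θ₀‖ ≤ lam0 / c3 → f x < f θ₀ :=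
  isStrictMax_on_closedBall_of_hessian_bound_general f hf H hH lam0 c3 hc3 θ₀ hneg hLip hgrad
end
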